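/- arXiv:1209.6570 — 6 statements merged into one kernel-verified Lean document; each statement's English description precedes it below -/
import Mathlib

section
/- The function $a(t) = 7 + 2t - 6\sqrt{5+4t} \cos\left(\frac{1}{3}\arccos\left(\frac{11+14t+2t^2}{(5+4t)^{3/2}}\right) + \frac{\pi}{3}\right)$ satisfies the cubic equation $(a(t) + 2 - 2t)^3 - 27 a(t)^2 = 0$ for all $t \in [0,1)$. -/
/-! The substitution `a = 7 + 2t - 6 √(5 + 4t) c` turns `(a + 2 - 2t)³ = 27 a²` into the
Chebyshev equation `4c³ - 3c = -x` with `x = (11 + 14t + 2t²) / (5 + 4t)^{3/2}`. For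
`|t| ≤ 1` one has `(5 + 4t)³ - (11 + 14t + 2t²)² = 4 (1 - t)³ (1 + t) ≥ 0`, so `|x| ≤ 1`, and
`c = cos (arccos x / 3 + π / 3)` solves it since `cos (3 · (θ/3 + π/3)) = cos (θ + π) = -x`. -/

open Real

theorem Real.cos_arccos_div_three_add_pi_div_three {x : ℝ} (hx₁ : -1 ≤ x) (hx₂ : x ≤ 1) :
    4 * cos (1 / 3 * arccos x + π / 3) ^ 3 - 3 * cos (1 / 3 * arccos x + π / 3) = -x := by
  rw [← cos_three_mul, show 3 * (1 / 3 * arccos x + π / 3) = arccos x + π by ring,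
    cos_add_pi, cos_arccos hx₁ hx₂]

theorem Real.rpow_three_halves {s : ℝ} (hs : 0 ≤ s) : s ^ ((3 : ℝ) / 2) = √s ^ 3 := by
  rw [rpow_div_two_eq_sqrt 3 hs]
  exact_mod_cast rpow_natCast (√s) 3

theorem sq_numerator_le_cube {t : ℝ} (ht₁ : -1 ≤ t) (ht₂ : t ≤ 1) :
    (11 + 14 * t + 2 * t ^ 2) ^ 2 ≤ (5 + 4 * t) ^ 3 := by
  have hfactor : (5 + 4 * t) ^ 3 - (11 + 14 * t + 2 * t ^ 2) ^ 2 = 4 * (1 - t) ^ 3 * (1 + t) := by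
    ring
  have : 0 ≤ 4 * (1 - t) ^ 3 * (1 + t) := by
    have := pow_nonneg (sub_nonneg.mpr ht₂) 3
    have : 0 ≤ 1 + t := by linarith
    positivity
  linarith

theorem abs_arccos_arg_le_one {t : ℝ} (ht₁ : -1 ≤ t) (ht₂ : t ≤ 1) :
    |(11 + 14 * t + 2 * t ^ 2) / √(5 + 4 * t) ^ 3| ≤ 1 := by
  have hs : 0 ≤ 5 + 4 * t := by linarith
  have hu : 0 < √(5 + 4 * t) ^ 3 := pow_pos (sqrt_pos.mpr (by linarith)) 3
  rw [abs_div, abs_of_pos hu, div_le_one hu, ← sq_le_sq₀ (abs_nonneg _) hu.le, sq_abs,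
    ← pow_mul, show 3 * 2 = 2 * 3 by rfl, pow_mul, sq_sqrt hs]
  exact sq_numerator_le_cube ht₁ ht₂

theorem cubic_eq_zero_of_chebyshev {t u c : ℝ} (hu : u ^ 2 = 5 + 4 * t)
    (hc : u ^ 3 * (4 * c ^ 3 - 3 * c) = -(11 + 14 * t + 2 * t ^ 2)) :
    (7 + 2 * t - 6 * u * c + 2 - 2 * t) ^ 3 - 27 * (7 + 2 * t - 6 * u * c) ^ 2 = 0 := by
  linear_combination (-162 * u * c) * hu - 54 * hc

theorem a_satisfies_cubic :
    ∀ t ∈ Set.Ico (0 : ℝ) 1,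
      (7 + 2 * t - 6 * Real.sqrt (5 + 4 * t) *
          Real.cos (1 / 3 * Real.arccos ((11 + 14 * t + 2 * t ^ 2) /
            (5 + 4 * t) ^ ((3 : ℝ) / 2)) + Real.pi / 3) + 2 - 2 * t) ^ 3 -
        27 * (7 + 2 * t - 6 * Real.sqrt (5 + 4 * t) *
          Real.cos (1 / 3 * Real.arccos ((11 + 14 * t + 2 * t ^ 2) /
            (5 + 4 * t) ^ ((3 : ℝ) / 2)) + Real.pi / 3)) ^ 2 = 0 := by
  rintro t ⟨ht₀, ht₁⟩
  have hs : 0 ≤ 5 + 4 * t := by linarith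
  have hu : 0 < √(5 + 4 * t) ^ 3 := pow_pos (sqrt_pos.mpr (by linarith)) 3
  rw [rpow_three_halves hs]
  apply cubic_eq_zero_of_chebyshev (sq_sqrt hs)
  obtain ⟨hx₁, hx₂⟩ := abs_le.mp (abs_arccos_arg_le_one (by linarith) ht₁.le)
  rw [cos_arccos_div_three_add_pi_div_three hx₁ hx₂]
  field_simp
end

section
/- Let $a : [0,1) \to \mathbb{R}$ be a differentiable function with $a(0) = 1$, $0 < a(t) \le 1$, satisfying $a'(t) = -\frac{6a(t)}{4 - 4t - a(t)}$ (where $4-4t-a(t) > 0$) for all $t \in [0,1)$. Then $(a(t) + 2 - 2t)^3 = 27 a(t)^2$ for all $t \in [0,1)$. -/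
/-!
Writing `u = a + 2 - 2t` and `D = 4 - 4t - a`, the equation gives `u' = -4u/D` and `a' = -6a/D`,
so `(u³/a²)' / (u³/a²) = 3u'/u - 2a'/a = 0`: the quotient `u³/a²` is a first integral.
It equals `27` at `t = 0`, hence everywhere on `[0, 1)`.
-/

open Set

theorem eq_of_hasDerivAt_zero_on_Ico {E : Type*} [NormedAddCommGroup E] [NormedSpace ℝ E]
    {f : ℝ → E} {a b : ℝ} (hf : ∀ t ∈ Ico a b, HasDerivAt f 0 t) :
    ∀ t ∈ Ico a b, f t = f a := by
  rintro t ⟨hat, htb⟩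
  have hsub : Icc a t ⊆ Ico a b := fun x hx => ⟨hx.1, hx.2.trans_lt htb⟩
  have hcont : ContinuousOn f (Icc a t) := fun x hx =>
    (hf x (hsub hx)).continuousAt.continuousWithinAt
  exact constant_of_has_deriv_right_zero hcont
    (fun x hx => (hf x (hsub (Ico_subset_Icc_self hx))).hasDerivWithinAt) t ⟨hat, le_rfl⟩

theorem hasDerivAt_firstIntegral {a : ℝ → ℝ} {t : ℝ} (ha : a t ≠ 0)
    (hD : 4 - 4 * t - a t ≠ 0) (ha' : HasDerivAt a (-(6 * a t) / (4 - 4 * t - a t)) t) :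
    HasDerivAt (fun s => (a s + 2 - 2 * s) ^ 3 / a s ^ 2) 0 t := by
  set a' := -(6 * a t) / (4 - 4 * t - a t)
  have hu : HasDerivAt (fun s => a s + 2 - 2 * s) (a' - 2) t := by
    simpa using (ha'.add_const 2).fun_sub ((hasDerivAt_id' t).const_mul 2)
  have hquot := (hu.fun_pow 3).fun_div (ha'.fun_pow 2) (pow_ne_zero 2 ha)
  have ha'D : a' * (4 - 4 * t - a t) = -(6 * a t) := div_mul_cancel₀ _ hD
  refine hquot.congr_deriv ((div_eq_zero_iff).2 (Or.inl ?_))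
  linear_combination (-(a t) * (a t + 2 - 2 * t) ^ 2) * ha'D

theorem ode_first_integral (a : ℝ → ℝ)
    (ha0 : a 0 = 1)
    (hpos : ∀ t ∈ Set.Ico (0 : ℝ) 1, 0 < a t ∧ a t ≤ 1)
    (hdenom : ∀ t ∈ Set.Ico (0 : ℝ) 1, 0 < 4 - 4 * t - a t)
    (hderiv : ∀ t ∈ Set.Ico (0 : ℝ) 1,
      HasDerivAt a (-(6 * a t) / (4 - 4 * t - a t)) t) :
    ∀ t ∈ Set.Ico (0 : ℝ) 1, (a t + 2 - 2 * t) ^ 3 = 27 * (a t) ^ 2 := by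
  intro t ht
  have hconst := eq_of_hasDerivAt_zero_on_Ico (fun s hs =>
    hasDerivAt_firstIntegral (hpos s hs).1.ne' (hdenom s hs).ne' (hderiv s hs)) t ht
  rw [← div_eq_iff (pow_ne_zero 2 (hpos t ht).1.ne'), hconst, ha0]
  norm_num
end

section
/- Let $a(t)$ be the solution of the cubic $(a+2-2t)^3 = 27a^2$ given by $a(t) = 7+2t-6\sqrt{5+4t}\cos\left(\frac{1}{3}\arccos\left(\frac{11+14t+2t^2}{(5+4t)^{3/2}}\right)+\frac{\pi}{3}\right)$. Then $\lim_{t \to 1^-} \frac{a(t)}{(1-t)^{3/2}} = \left(\frac{2}{3}\right)^{3/2}$. -/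
/-!
Write `θ(t) = arccos (cubicArg t)` and `r = √(5 + 4t)`. The numerator splits as
`(7 + 2t - 3r) - 6r (cos (θ/3 + π/3) - cos (π/3))`. The first part equals
`4(1 - t)² / (7 + 2t + 3r)`, which is `o((1 - t)^(3/2))`; the second is `~ √3 r θ`, the derivative
of `cos (· / 3 + π/3)` at `0` being `-√3/6`. Since `r⁶ - (11 + 14t + 2t²)² = 4(1 - t)³(1 + t)`,
`1 - cubicArg t` vanishes to third order at `t = 1`, and `arccos x ~ √(2(1 - x))` as `x → 1⁻` then
gives `θ ~ (2√2/27)(1 - t)^(3/2)`. The limit is `3√3 · 2√2/27 = (2/3)^(3/2)`.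
-/

open Filter Topology Real

lemma tendsto_arccos_nhdsLT_one : Tendsto arccos (𝓝[<] 1) (𝓝[>] 0) := by
  refine tendsto_nhdsWithin_of_tendsto_nhds_of_eventually_within _ ?_ ?_
  · simpa [arccos_one] using (continuous_arccos.tendsto 1).mono_left nhdsWithin_le_nhds
  · filter_upwards [self_mem_nhdsWithin] with x hx using arccos_pos.2 hx

lemma tendsto_div_sin_half_nhdsNE_zero :
    Tendsto (fun θ => θ / sin (θ / 2)) (𝓝[≠] 0) (𝓝 2) := by
  have hderiv : HasDerivAt (fun θ => sin (θ / 2)) (1 / 2) 0 := by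
    simpa using ((hasDerivAt_id (0 : ℝ)).div_const 2).sin
  have := (hasDerivAt_iff_tendsto_slope.1 hderiv).inv₀ (by norm_num)
  simpa [slope_def_field] using this

lemma tendsto_arccos_div_sqrt_nhdsLT_one :
    Tendsto (fun x => arccos x / √((1 - x) / 2)) (𝓝[<] 1) (𝓝 2) := by
  refine (tendsto_div_sin_half_nhdsNE_zero.comp
    (tendsto_arccos_nhdsLT_one.mono_right (nhdsGT_le_nhdsNE 0))).congr' ?_
  filter_upwards [Ioo_mem_nhdsLT (show (-1 : ℝ) < 1 by norm_num)] with x hx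
  rw [Function.comp_apply, sin_half_eq_sqrt (arccos_nonneg x)
    (by linarith [arccos_le_pi x, pi_pos]), cos_arccos hx.1.le hx.2.le]

lemma tendsto_cos_third_add_pi_div_three_slope :
    Tendsto (fun θ => (cos (1 / 3 * θ + π / 3) - 1 / 2) / θ) (𝓝[≠] 0) (𝓝 (-(√3 / 6))) := by
  have hderiv : HasDerivAt (fun θ => cos (1 / 3 * θ + π / 3)) (-(√3 / 6)) 0 := by
    convert (((hasDerivAt_id (0 : ℝ)).const_mul (1 / 3)).add_const (π / 3)).cos using 1
    · rfl
    · simp only [id_eq, mul_zero, zero_add, sin_pi_div_three]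
      ring
  simpa [slope_fun_def_field, cos_pi_div_three] using hasDerivAt_iff_tendsto_slope.1 hderiv

lemma sqrt_five_add_four_mul_one : √(5 + 4 * 1 : ℝ) = 3 := by
  rw [show (5 + 4 * 1 : ℝ) = 3 ^ 2 by norm_num, sqrt_sq (by norm_num)]

lemma rpow_three_div_two_eq_sqrt_pow {x : ℝ} (hx : 0 ≤ x) : x ^ ((3 : ℝ) / 2) = √x ^ 3 := by
  rw [rpow_div_two_eq_sqrt _ hx]
  norm_cast

noncomputable def cubicArg (t : ℝ) : ℝ :=
  (11 + 14 * t + 2 * t ^ 2) / (5 + 4 * t) ^ ((3 : ℝ) / 2)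

lemma one_sub_cubicArg_div_two {t : ℝ} (ht : 0 ≤ t) :
    (1 - cubicArg t) / 2 = 2 * (1 + t) /
      (√(5 + 4 * t) ^ 3 * (√(5 + 4 * t) ^ 3 + (11 + 14 * t + 2 * t ^ 2))) * (1 - t) ^ 3 := by
  have hr : 0 < √(5 + 4 * t) := sqrt_pos.2 (by linarith)
  have hr2 : √(5 + 4 * t) ^ 2 = 5 + 4 * t := sq_sqrt (by linarith)
  rw [cubicArg, rpow_three_div_two_eq_sqrt_pow (by linarith)]
  set r := √(5 + 4 * t)
  field_simp
  linear_combination (r ^ 4 + r ^ 2 * (5 + 4 * t) + (5 + 4 * t) ^ 2) * hr2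

lemma cubicArg_one : cubicArg 1 = 1 := by
  rw [cubicArg, rpow_three_div_two_eq_sqrt_pow (by norm_num), sqrt_five_add_four_mul_one]
  norm_num

lemma cubicArg_lt_one {t : ℝ} (h0 : 0 ≤ t) (h1 : t < 1) : cubicArg t < 1 := by
  have h := one_sub_cubicArg_div_two h0
  have : 0 < 2 * (1 + t) /
      (√(5 + 4 * t) ^ 3 * (√(5 + 4 * t) ^ 3 + (11 + 14 * t + 2 * t ^ 2))) * (1 - t) ^ 3 := by
    have : 0 < 1 - t := by linarith
    positivity
  linarith

lemma tendsto_cubicArg_nhdsLT_one : Tendsto cubicArg (𝓝[<] 1) (𝓝[<] 1) := by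
  refine tendsto_nhdsWithin_of_tendsto_nhds_of_eventually_within _ ?_ ?_
  · have hcont : ContinuousAt cubicArg 1 := by
      unfold cubicArg
      exact ContinuousAt.div (by fun_prop)
        ((continuousAt_id.const_mul 4).const_add 5 |>.rpow_const (Or.inr (by norm_num)))
        (by norm_num)
    simpa [cubicArg_one] using hcont.tendsto.mono_left nhdsWithin_le_nhds
  · filter_upwards [Ioo_mem_nhdsLT zero_lt_one] with t ht using cubicArg_lt_one ht.1.le ht.2

lemma tendsto_sqrt_one_sub_cubicArg_div_two_div :
    Tendsto (fun t => √((1 - cubicArg t) / 2) / (1 - t) ^ ((3 : ℝ) / 2)) (𝓝[<] 1)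
      (𝓝 (√2 / 27)) := by
  have hcont : ContinuousAt (fun t => √(2 * (1 + t) /
      (√(5 + 4 * t) ^ 3 * (√(5 + 4 * t) ^ 3 + (11 + 14 * t + 2 * t ^ 2))))) 1 := by
    refine continuous_sqrt.continuousAt.comp (ContinuousAt.div (by fun_prop) (by fun_prop) ?_)
    positivity
  have hval : √(2 * (1 + 1) /
      (√(5 + 4 * 1) ^ 3 * (√(5 + 4 * 1) ^ 3 + (11 + 14 * 1 + 2 * 1 ^ 2)))) = √2 / 27 := by
    have h2 : √2 ^ 2 = 2 := sq_sqrt (by norm_num)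
    rw [sqrt_five_add_four_mul_one, ← sqrt_sq (by positivity : 0 ≤ √2 / 27)]
    congr 1
    field_simp
    linear_combination (-1458) * h2
  refine (hval ▸ hcont.tendsto.mono_left nhdsWithin_le_nhds).congr' ?_
  filter_upwards [Ioo_mem_nhdsLT zero_lt_one] with t ht
  have hs : 0 < √(1 - t) := sqrt_pos.2 (by linarith [ht.2])
  have hs3 : (1 - t) ^ 3 = (√(1 - t) ^ 3) ^ 2 := by
    rw [← pow_mul, mul_comm, pow_mul, sq_sqrt (by linarith [ht.2])]
  rw [one_sub_cubicArg_div_two ht.1.le, rpow_three_div_two_eq_sqrt_pow (by linarith [ht.2]), hs3,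
    sqrt_mul' _ (sq_nonneg _), sqrt_sq (by positivity), mul_div_cancel_right₀ _ (by positivity)]

lemma tendsto_arccos_cubicArg_div_rpow :
    Tendsto (fun t => arccos (cubicArg t) / (1 - t) ^ ((3 : ℝ) / 2)) (𝓝[<] 1)
      (𝓝 (2 * (√2 / 27))) := by
  refine ((tendsto_arccos_div_sqrt_nhdsLT_one.comp tendsto_cubicArg_nhdsLT_one).mul
    tendsto_sqrt_one_sub_cubicArg_div_two_div).congr' ?_
  filter_upwards [tendsto_cubicArg_nhdsLT_one self_mem_nhdsWithin] with t (ht : cubicArg t < 1)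
  have : 0 < √((1 - cubicArg t) / 2) := sqrt_pos.2 (by linarith)
  simp only [Function.comp_apply]
  field_simp

lemma tendsto_sub_three_sqrt_div_rpow :
    Tendsto (fun t => (7 + 2 * t - 3 * √(5 + 4 * t)) / (1 - t) ^ ((3 : ℝ) / 2)) (𝓝[<] 1)
      (𝓝 0) := by
  have hcont : ContinuousAt (fun t => 4 * √(1 - t) / (7 + 2 * t + 3 * √(5 + 4 * t))) 1 :=
    ContinuousAt.div (by fun_prop) (by fun_prop) (by positivity)
  have hlim : Tendsto (fun t => 4 * √(1 - t) / (7 + 2 * t + 3 * √(5 + 4 * t))) (𝓝[<] 1)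
      (𝓝 0) := by
    simpa using hcont.tendsto.mono_left nhdsWithin_le_nhds
  refine hlim.congr' ?_
  filter_upwards [Ioo_mem_nhdsLT zero_lt_one] with t ht
  have hs : 0 < √(1 - t) := sqrt_pos.2 (by linarith [ht.2])
  have hs2 : √(1 - t) ^ 2 = 1 - t := sq_sqrt (by linarith [ht.2])
  have hr2 : √(5 + 4 * t) ^ 2 = 5 + 4 * t := sq_sqrt (by linarith [ht.1])
  have hd : 0 < 7 + 2 * t + 3 * √(5 + 4 * t) := by linarith [ht.1, sqrt_nonneg (5 + 4 * t)]
  rw [rpow_three_div_two_eq_sqrt_pow (by linarith [ht.2])]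
  set r := √(5 + 4 * t)
  set s := √(1 - t)
  field_simp
  linear_combination 9 * hr2 + 4 * (s ^ 2 + 1 - t) * hs2

lemma two_div_three_rpow_three_div_two : ((2 : ℝ) / 3) ^ ((3 : ℝ) / 2) = √3 * (2 * √2 / 9) := by
  have h2 : √2 ^ 2 = 2 := sq_sqrt (by norm_num)
  have h3 : √3 ^ 2 = 3 := sq_sqrt (by norm_num)
  rw [rpow_three_div_two_eq_sqrt_pow (by norm_num), sqrt_div' _ (by norm_num)]
  field_simp
  linear_combination 9 * h2 - 2 * (√3 ^ 2 + 3) * h3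

theorem a_limit :
    Tendsto (fun t : ℝ =>
        (7 + 2 * t - 6 * Real.sqrt (5 + 4 * t) *
          Real.cos (1 / 3 * Real.arccos ((11 + 14 * t + 2 * t ^ 2) /
            (5 + 4 * t) ^ ((3 : ℝ) / 2)) + Real.pi / 3)) / (1 - t) ^ ((3 : ℝ) / 2))
      (nhdsWithin 1 (Set.Iio 1)) (nhds (((2 : ℝ) / 3) ^ ((3 : ℝ) / 2))) := by
  have hθ := tendsto_arccos_nhdsLT_one.comp tendsto_cubicArg_nhdsLT_one
  have hr : Tendsto (fun t => √(5 + 4 * t)) (𝓝[<] 1) (𝓝 3) := by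
    have : ContinuousAt (fun t : ℝ => √(5 + 4 * t)) 1 := by fun_prop
    simpa only [sqrt_five_add_four_mul_one] using this.tendsto.mono_left nhdsWithin_le_nhds
  have hslope := tendsto_cos_third_add_pi_div_three_slope.comp
    (hθ.mono_right (nhdsGT_le_nhdsNE 0))
  have hlim := tendsto_sub_three_sqrt_div_rpow.sub
    (((hr.const_mul 6).mul hslope).mul tendsto_arccos_cubicArg_div_rpow)
  convert hlim.congr' ?_ using 2
  · rw [two_div_three_rpow_three_div_two]
    ring
  · filter_upwards [Ioo_mem_nhdsLT zero_lt_one, hθ self_mem_nhdsWithin]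
      with t ht (hθt : 0 < arccos (cubicArg t))
    have hs : 0 < (1 - t) ^ ((3 : ℝ) / 2) := rpow_pos_of_pos (by linarith [ht.2]) _
    simp only [Function.comp_apply]
    unfold cubicArg at hθt ⊢
    generalize arccos ((11 + 14 * t + 2 * t ^ 2) / (5 + 4 * t) ^ ((3 : ℝ) / 2)) = θ at hθt ⊢
    field_simp
    ring
end

section
/- Let $b(t) = 2(1-t)$ and let $a : [0,1) \to (0,\infty)$ satisfy $a' = -\frac{6a}{2b - a}$ with $2b(t) - a(t) > 0$ and $a(0) = 1$. Then for all $t \in [0,1)$, the function $t \mapsto \frac{a(t)}{(1-t)^{3/2}}$ is nonincreasing, and consequently $a(t) \le (1-t)^{3/2}$. -/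
/-!
By the quotient rule, with `u = 1 - t` and `D = 2b - a = 4u - a > 0`, the derivative of
`a / u ^ (3/2)` has numerator `a' u ^ (3/2) + (3/2) a u ^ (1/2) = -3 a² u ^ (1/2) / (2 D) ≤ 0`,
so the ratio is antitone on `[0, 1)`; its value at `0` is `a 0 = 1`, which gives `a ≤ u ^ (3/2)`.
-/

open Set Real

theorem antitoneOn_div_of_hasDerivAt {f g f' g' : ℝ → ℝ} {s : Set ℝ} (hs : Convex ℝ s)
    (hf : ∀ x ∈ s, HasDerivAt f (f' x) x) (hg : ∀ x ∈ s, HasDerivAt g (g' x) x)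
    (hg0 : ∀ x ∈ s, g x ≠ 0) (hle : ∀ x ∈ s, f' x * g x ≤ f x * g' x) :
    AntitoneOn (fun x => f x / g x) s := by
  have hquot : ∀ x ∈ s, HasDerivAt (fun x => f x / g x)
      ((f' x * g x - f x * g' x) / g x ^ 2) x :=
    fun x hx => (hf x hx).div (hg x hx) (hg0 x hx)
  refine antitoneOn_of_hasDerivWithinAt_nonpos hs
    (fun x hx => (hquot x hx).continuousAt.continuousWithinAt)
    (fun x hx => (hquot x (interior_subset hx)).hasDerivWithinAt) fun x hx => ?_
  exact div_nonpos_of_nonpos_of_nonneg (sub_nonpos.2 (hle x (interior_subset hx))) (sq_nonneg _)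

theorem hasDerivAt_one_sub_rpow (p : ℝ) {t : ℝ} (ht : t < 1) :
    HasDerivAt (fun t => (1 - t) ^ p) (-(p * (1 - t) ^ (p - 1))) t := by
  convert ((hasDerivAt_id' t).const_sub 1).rpow_const (p := p) (Or.inl (sub_pos.2 ht).ne')
    using 1
  ring

theorem three_halves_mul_le_six_mul_div {a u : ℝ} (hD : 0 < 4 * u - a) :
    3 / 2 * a ≤ 6 * a * u / (4 * u - a) := by
  rw [le_div_iff₀ hD]
  nlinarith [sq_nonneg a]

-- `a' g ≤ a g'` for `g = u ^ (3/2)`, `a' = -6a / (4u - a)`, `g' = -(3/2) u ^ (1/2)`; here `u = 1 - t`.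
theorem neg_div_mul_rpow_le {a u : ℝ} (hu : 0 < u) (hD : 0 < 4 * u - a) :
    -(6 * a) / (4 * u - a) * u ^ ((3 : ℝ) / 2) ≤ a * -(3 / 2 * u ^ ((3 : ℝ) / 2 - 1)) := by
  have hsplit : u ^ ((3 : ℝ) / 2) = u * u ^ ((3 : ℝ) / 2 - 1) := by
    rw [← rpow_one_add' hu.le (by norm_num)]
    norm_num
  have hpow : 0 ≤ u ^ ((3 : ℝ) / 2 - 1) := rpow_nonneg hu.le _
  calc -(6 * a) / (4 * u - a) * u ^ ((3 : ℝ) / 2)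
      = -(6 * a * u / (4 * u - a) * u ^ ((3 : ℝ) / 2 - 1)) := by rw [hsplit]; ring
    _ ≤ -(3 / 2 * a * u ^ ((3 : ℝ) / 2 - 1)) :=
      neg_le_neg (mul_le_mul_of_nonneg_right (three_halves_mul_le_six_mul_div hD) hpow)
    _ = a * -(3 / 2 * u ^ ((3 : ℝ) / 2 - 1)) := by ring

theorem a_ratio_antitone_general (b a : ℝ → ℝ) (hb : ∀ t, b t = 2 * (1 - t))
    (ha0 : a 0 = 1)
    (hdenom : ∀ t ∈ Set.Ico (0 : ℝ) 1, 0 < 2 * b t - a t)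
    (hderiv : ∀ t ∈ Set.Ico (0 : ℝ) 1,
      HasDerivAt a (-(6 * a t) / (2 * b t - a t)) t) :
    AntitoneOn (fun t => a t / (1 - t) ^ ((3 : ℝ) / 2)) (Set.Ico (0 : ℝ) 1) ∧
      ∀ t ∈ Set.Ico (0 : ℝ) 1, a t ≤ (1 - t) ^ ((3 : ℝ) / 2) := by
  have hD : ∀ t, 2 * b t - a t = 4 * (1 - t) - a t := fun t => by rw [hb]; ring
  simp only [hD] at hdenom hderiv
  have hu : ∀ t ∈ Ico (0 : ℝ) 1, 0 < 1 - t := fun t ht => sub_pos.2 ht.2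
  have hanti : AntitoneOn (fun t => a t / (1 - t) ^ ((3 : ℝ) / 2)) (Ico 0 1) :=
    antitoneOn_div_of_hasDerivAt (convex_Ico 0 1) hderiv
      (fun t ht => hasDerivAt_one_sub_rpow _ ht.2)
      (fun t ht => (rpow_pos_of_pos (hu t ht) _).ne')
      fun t ht => neg_div_mul_rpow_le (hu t ht) (hdenom t ht)
  refine ⟨hanti, fun t ht => ?_⟩
  have hle : a t / (1 - t) ^ ((3 : ℝ) / 2) ≤ a 0 / (1 - 0) ^ ((3 : ℝ) / 2) :=
    hanti ⟨le_rfl, zero_lt_one⟩ ht ht.1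
  rwa [ha0, sub_zero, one_rpow, div_one, div_le_one (rpow_pos_of_pos (hu t ht) _)] at hle

theorem a_ratio_antitone (b a : ℝ → ℝ) (hb : ∀ t, b t = 2 * (1 - t))
    (ha0 : a 0 = 1)
    (hpos : ∀ t ∈ Set.Ico (0 : ℝ) 1, 0 < a t)
    (hdenom : ∀ t ∈ Set.Ico (0 : ℝ) 1, 0 < 2 * b t - a t)
    (hderiv : ∀ t ∈ Set.Ico (0 : ℝ) 1,
      HasDerivAt a (-(6 * a t) / (2 * b t - a t)) t) :
    AntitoneOn (fun t => a t / (1 - t) ^ ((3 : ℝ) / 2)) (Set.Ico (0 : ℝ) 1) ∧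
      ∀ t ∈ Set.Ico (0 : ℝ) 1, a t ≤ (1 - t) ^ ((3 : ℝ) / 2) :=
  a_ratio_antitone_general b a hb ha0 hdenom hderiv
end

section
/- Define $b(t) = 2(1-t)$ and let $a : [0,1) \to (0,\infty)$ satisfy $a'(t) = -\frac{6a(t)}{2b(t) - a(t)}$ with $0 < a(t) \le (1-t)^{3/2}$. Define $\Phi(t) = \frac{9 a(t)^2}{(2b(t) - a(t))^2}$. Then $\frac{d}{dt}\left(\frac{\Phi(t)}{1-t}\right) = -\frac{9 a(t)^3 (8 b(t) - a(t))}{(1-t)^2 (2b(t) - a(t))^4} \le 0$, i.e., $\Phi(t)/(1-t)$ is nonincreasing on $[0,1)$. -/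
/-!
Write `D = 2b - a`. Differentiating `Φ = 9a²/D²` and eliminating `a'` with the ODE
(and `b' = -2`) gives `Φ' = -72a²(a + b)/D⁴`; the quotient rule for `Φ/(1-t)` with `b = 2(1-t)`
then collapses to `-9a³(8b - a)/((1-t)²D⁴)`. The bound `a ≤ (1-t)^{3/2} ≤ 1-t` keeps `a`
below `b`, so `D > 0` and `8b - a > 0`, and the derivative is nonpositive.
-/

open Set

theorem Convex.antitoneOn_of_hasDerivAt_nonpos {s : Set ℝ} (hs : Convex ℝ s) {f f' : ℝ → ℝ}
    (hf : ∀ x ∈ s, HasDerivAt f (f' x) x) (hf' : ∀ x ∈ s, f' x ≤ 0) : AntitoneOn f s :=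
  antitoneOn_of_hasDerivWithinAt_nonpos hs (fun x hx ↦ (hf x hx).continuousAt.continuousWithinAt)
    (fun x hx ↦ (hf x (interior_subset hx)).hasDerivWithinAt)
    (fun x hx ↦ hf' x (interior_subset hx))

section PhiRatio

variable {a b : ℝ → ℝ} {t : ℝ}

theorem hasDerivAt_phi (ha : HasDerivAt a (-(6 * a t) / (2 * b t - a t)) t)
    (hb : HasDerivAt b (-2) t) (hD : 2 * b t - a t ≠ 0) :
    HasDerivAt (fun s ↦ 9 * a s ^ 2 / (2 * b s - a s) ^ 2)
      (-(72 * a t ^ 2 * (a t + b t)) / (2 * b t - a t) ^ 4) t := by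
  refine (((ha.pow 2).const_mul 9).div (((hb.const_mul 2).sub ha).pow 2)
    (pow_ne_zero 2 hD)).congr_deriv ?_
  simp only [Pi.pow_apply, Pi.sub_apply]
  field_simp
  ring

theorem hasDerivAt_phi_div_one_sub (ha : HasDerivAt a (-(6 * a t) / (2 * b t - a t)) t)
    (hb : HasDerivAt b (-2) t) (hbt : b t = 2 * (1 - t)) (hD : 2 * b t - a t ≠ 0)
    (ht : 1 - t ≠ 0) :
    HasDerivAt (fun s ↦ (9 * a s ^ 2 / (2 * b s - a s) ^ 2) / (1 - s))
      (-(9 * a t ^ 3 * (8 * b t - a t)) / ((1 - t) ^ 2 * (2 * b t - a t) ^ 4)) t := by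
  refine ((hasDerivAt_phi ha hb hD).div ((hasDerivAt_id' t).const_sub 1) ht).congr_deriv ?_
  rw [hbt] at hD ⊢
  field_simp
  ring

theorem phi_ratio_deriv_nonpos (ha : 0 ≤ a t) (hab : a t ≤ 8 * b t) :
    -(9 * a t ^ 3 * (8 * b t - a t)) / ((1 - t) ^ 2 * (2 * b t - a t) ^ 4) ≤ 0 :=
  div_nonpos_of_nonpos_of_nonneg
    (neg_nonpos.2 (by have := sub_nonneg.2 hab; positivity)) (by positivity)

end PhiRatio

theorem lt_four_mul_of_le_rpow_three_halves {a u : ℝ} (hu₀ : 0 < u) (hu₁ : u ≤ 1)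
    (ha : a ≤ u ^ ((3 : ℝ) / 2)) : a < 4 * u := by
  have : u ^ ((3 : ℝ) / 2) ≤ u := Real.rpow_le_self_of_le_one hu₀.le hu₁ (by norm_num)
  linarith

theorem phi_ratio_antitone (b a : ℝ → ℝ) (hb : ∀ t, b t = 2 * (1 - t))
    (hpos : ∀ t ∈ Set.Ico (0 : ℝ) 1, 0 < a t ∧ a t ≤ (1 - t) ^ ((3 : ℝ) / 2))
    (hderiv : ∀ t ∈ Set.Ico (0 : ℝ) 1,
      HasDerivAt a (-(6 * a t) / (2 * b t - a t)) t) :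
    (∀ t ∈ Set.Ico (0 : ℝ) 1,
      HasDerivAt (fun s => (9 * (a s) ^ 2 / (2 * b s - a s) ^ 2) / (1 - s))
        (-(9 * (a t) ^ 3 * (8 * b t - a t)) / ((1 - t) ^ 2 * (2 * b t - a t) ^ 4)) t ∧
      -(9 * (a t) ^ 3 * (8 * b t - a t)) / ((1 - t) ^ 2 * (2 * b t - a t) ^ 4) ≤ 0) ∧
    AntitoneOn (fun t => (9 * (a t) ^ 2 / (2 * b t - a t) ^ 2) / (1 - t))
      (Set.Ico (0 : ℝ) 1) := by
  have hb' (t : ℝ) : HasDerivAt b (-2) t := by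
    rw [funext hb]
    simpa using ((hasDerivAt_id t).const_sub 1).const_mul 2
  have hratio : ∀ t ∈ Ico (0 : ℝ) 1,
      HasDerivAt (fun s => (9 * (a s) ^ 2 / (2 * b s - a s) ^ 2) / (1 - s))
        (-(9 * (a t) ^ 3 * (8 * b t - a t)) / ((1 - t) ^ 2 * (2 * b t - a t) ^ 4)) t ∧
      -(9 * (a t) ^ 3 * (8 * b t - a t)) / ((1 - t) ^ 2 * (2 * b t - a t) ^ 4) ≤ 0 := by
    intro t ht
    obtain ⟨ha₀, ha₁⟩ := hpos t ht
    have hu : 0 < 1 - t := sub_pos.2 ht.2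
    have hab : a t < 4 * (1 - t) :=
      lt_four_mul_of_le_rpow_three_halves hu (by linarith [ht.1]) ha₁
    have hD : 2 * b t - a t ≠ 0 := by rw [hb]; linarith
    exact ⟨hasDerivAt_phi_div_one_sub (hderiv t ht) (hb' t) (hb t) hD hu.ne',
      phi_ratio_deriv_nonpos ha₀.le (by rw [hb]; linarith)⟩
  exact ⟨hratio, (convex_Ico 0 1).antitoneOn_of_hasDerivAt_nonpos (fun t ht ↦ (hratio t ht).1)
    (fun t ht ↦ (hratio t ht).2)⟩
end

section
/- Let $(X_j)_{0 \le j \le m}$ be a supermartingale with increments satisfying $-C \le X_{j+1} - X_j \le c$ for all $j$, where $0 < c < C/10$. Then for any $0 < a < cm$: $\Pr[X_m - X_0 > a] \le \exp\left(-\frac{a^2}{3 c C m}\right)$. -/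
/-!
Chernoff's method with the exponent `t = 2a / (3cCm)`. By convexity of `exp`, an increment `D`
with values in `[-C, c]` and `E[D | ℱ] ≤ 0` satisfies `E[exp (t D) | ℱ] ≤ twoPointMgf C c t`, the
value for the centred law on `{-C, c}`; iterating along the filtration bounds the moment
generating function of `X m - X 0` by its `m`-th power. As long as `tC ≤ 1`, which is where
`a < cm` enters, the Taylor bound `exp x ≤ 1 + x + 3x²/4` gives
`twoPointMgf C c t ≤ exp (3t²cC/4)`: the variance proxy is `cC` instead of Hoeffding's
`(c + C)² / 4`.
-/

open MeasureTheory ProbabilityTheory Real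

lemma Real.exp_le_one_add_add_three_div_four_mul_sq {x : ℝ} (hx : |x| ≤ 1) :
    exp x ≤ 1 + x + 3 / 4 * x ^ 2 := by
  have h := Real.exp_bound hx (n := 2) (by norm_num)
  norm_num [Finset.sum_range_succ, Nat.factorial, sq_abs] at h
  linarith [(abs_sub_le_iff.1 h).1]

/-- The moment generating function of the mean-zero law on `{-C, c}`. -/
noncomputable def twoPointMgf (C c t : ℝ) : ℝ :=
  (c * exp (-(t * C)) + C * exp (t * c)) / (c + C)

section TwoPointMgf

variable {C c t : ℝ}

lemma exp_mul_le_twoPointMgf_add_mul {x : ℝ} (hcC : 0 < c + C) (hCx : -C ≤ x) (hxc : x ≤ c) :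
    exp (t * x) ≤ twoPointMgf C c t + (exp (t * c) - exp (-(t * C))) / (c + C) * x := by
  have hw₁ : 0 ≤ (c - x) / (c + C) := div_nonneg (by linarith) hcC.le
  have hw₂ : 0 ≤ (x + C) / (c + C) := div_nonneg (by linarith) hcC.le
  have hw : (c - x) / (c + C) + (x + C) / (c + C) = 1 := by field_simp; ring
  have h := convexOn_exp.2 (Set.mem_univ (-(t * C))) (Set.mem_univ (t * c)) hw₁ hw₂ hw
  have hx : ((c - x) / (c + C)) • -(t * C) + ((x + C) / (c + C)) • (t * c) = t * x := by
    simp only [smul_eq_mul]; field_simp; ring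
  rw [hx] at h
  refine h.trans_eq ?_
  simp only [smul_eq_mul, twoPointMgf]
  field_simp
  ring

lemma twoPointMgf_le_exp (hc : 0 ≤ c) (hC : 0 ≤ C) (hcC : 0 < c + C) (htC : |t * C| ≤ 1)
    (htc : |t * c| ≤ 1) : twoPointMgf C c t ≤ exp (3 / 4 * t ^ 2 * c * C) := by
  have hC' := exp_le_one_add_add_three_div_four_mul_sq (x := -(t * C)) (by rwa [abs_neg])
  have hc' := exp_le_one_add_add_three_div_four_mul_sq htc
  calc twoPointMgf C c t ≤ 1 + 3 / 4 * t ^ 2 * c * C := by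
        rw [twoPointMgf, div_le_iff₀ hcC]
        nlinarith [mul_le_mul_of_nonneg_left hC' hc, mul_le_mul_of_nonneg_left hc' hC]
    _ ≤ exp (3 / 4 * t ^ 2 * c * C) := by linarith [add_one_le_exp (3 / 4 * t ^ 2 * c * C)]

end TwoPointMgf

section Conditional

variable {Ω : Type*} {m0 : MeasurableSpace Ω} {μ : Measure Ω}

lemma condExp_exp_mul_le_twoPointMgf [IsFiniteMeasure μ] {m : MeasurableSpace Ω} (hm : m ≤ m0)
    {D : Ω → ℝ} {C c t : ℝ} (hcC : 0 < c + C) (ht : 0 ≤ t) (hD : Integrable D μ)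
    (hDb : ∀ᵐ ω ∂μ, -C ≤ D ω ∧ D ω ≤ c) (hmean : μ[D | m] ≤ᵐ[μ] 0) :
    μ[fun ω ↦ exp (t * D ω) | m] ≤ᵐ[μ] fun _ ↦ twoPointMgf C c t := by
  set β := (exp (t * c) - exp (-(t * C))) / (c + C)
  have hβ : 0 ≤ β := div_nonneg (sub_nonneg.2 (exp_le_exp.2 (by nlinarith))) hcC.le
  have hexp : Integrable (fun ω ↦ exp (t * D ω)) μ :=
    integrable_exp_mul_of_le t c ht hD.aemeasurable (hDb.mono fun _ h ↦ h.2)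
  have hchord : (fun ω ↦ exp (t * D ω)) ≤ᵐ[μ] (fun _ ↦ twoPointMgf C c t) + β • D :=
    hDb.mono fun ω h ↦ exp_mul_le_twoPointMgf_add_mul hcC h.1 h.2
  filter_upwards [condExp_mono hexp ((integrable_const _).add (hD.smul β)) hchord,
    condExp_add (integrable_const (twoPointMgf C c t)) (hD.smul β) m,
    condExp_smul (μ := μ) β D m, hmean] with ω hmono hadd hsmul hneg
  rw [hadd, condExp_const hm, Pi.add_apply, hsmul] at hmono
  simp only [Pi.smul_apply, smul_eq_mul, Pi.zero_apply] at hmono hneg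
  nlinarith

lemma MeasureTheory.Supermartingale.condExp_sub_nonpos [IsFiniteMeasure μ] {ι : Type*}
    [Preorder ι] {ℱ : Filtration ι m0} {X : ι → Ω → ℝ} (hX : Supermartingale X ℱ μ) {i j : ι}
    (hij : i ≤ j) : μ[X j - X i | ℱ i] ≤ᵐ[μ] 0 := by
  filter_upwards [condExp_sub (m := ℱ i) (hX.integrable j) (hX.integrable i),
    hX.condExp_ae_le hij] with ω hsub hle
  rw [hsub, condExp_of_stronglyMeasurable (ℱ.le i) (hX.stronglyMeasurable i) (hX.integrable i)]
  exact sub_nonpos.2 hle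

section Increments

variable {ℱ : Filtration ℕ m0} {X : ℕ → Ω → ℝ}

lemma ae_sub_le_mul_of_ae_increment_le {c : ℝ} (hinc : ∀ j, ∀ᵐ ω ∂μ, X (j + 1) ω - X j ω ≤ c)
    (n : ℕ) : ∀ᵐ ω ∂μ, X n ω - X 0 ω ≤ c * n := by
  induction n with
  | zero => simp
  | succ n ih =>
    filter_upwards [ih, hinc n] with ω h₁ h₂
    push_cast
    linarith

lemma mgf_sub_le_pow_of_condExp_le [IsProbabilityMeasure μ] (hX : StronglyAdapted ℱ X)
    {t α : ℝ} (hint : ∀ n, Integrable (fun ω ↦ exp (t * (X n ω - X 0 ω))) μ)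
    (hint_inc : ∀ n, Integrable (fun ω ↦ exp (t * (X (n + 1) ω - X n ω))) μ)
    (hstep : ∀ n, μ[fun ω ↦ exp (t * (X (n + 1) ω - X n ω)) | ℱ n] ≤ᵐ[μ] fun _ ↦ α) (n : ℕ) :
    mgf (fun ω ↦ X n ω - X 0 ω) μ t ≤ α ^ n := by
  obtain ⟨ω₀, hpos, hle⟩ := ((condExp_nonneg (m := ℱ 0)
    (Filter.Eventually.of_forall fun ω ↦ (exp_pos (t * (X 1 ω - X 0 ω))).le)).and
      (hstep 0)).exists
  have hα : 0 ≤ α := hpos.trans hle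
  induction n with
  | zero => simp [mgf]
  | succ n ih =>
    set A : Ω → ℝ := fun ω ↦ exp (t * (X n ω - X 0 ω))
    set B : Ω → ℝ := fun ω ↦ exp (t * (X (n + 1) ω - X n ω))
    have hAB : (fun ω ↦ exp (t * (X (n + 1) ω - X 0 ω))) = A * B := by
      funext ω
      simp only [A, B, Pi.mul_apply, ← exp_add]
      ring_nf
    have hAm : StronglyMeasurable[ℱ n] A :=
      continuous_exp.comp_stronglyMeasurable
        (((hX n).sub ((hX 0).mono (ℱ.mono n.zero_le))).const_mul t)
    have hpull := condExp_mul_of_stronglyMeasurable_left hAm (hAB ▸ hint (n + 1)) (hint_inc n)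
    calc mgf (fun ω ↦ X (n + 1) ω - X 0 ω) μ t = ∫ ω, (A * μ[B | ℱ n]) ω ∂μ := by
          rw [mgf, hAB, ← integral_condExp (ℱ.le n), integral_congr_ae hpull]
      _ ≤ ∫ ω, α * A ω ∂μ := by
          refine integral_mono_of_nonneg ?_ ((hint n).const_mul α) ?_
          · filter_upwards [condExp_nonneg (m := ℱ n) (f := B)
              (Filter.Eventually.of_forall fun ω ↦ (exp_pos _).le)] with ω hB
            exact mul_nonneg (exp_pos _).le hB
          · filter_upwards [hstep n] with ω hB
            simpa only [Pi.mul_apply, mul_comm α] using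
              mul_le_mul_of_nonneg_left hB (exp_pos (t * (X n ω - X 0 ω))).le
      _ = α * mgf (fun ω ↦ X n ω - X 0 ω) μ t := integral_const_mul α A
      _ ≤ α ^ (n + 1) := by rw [pow_succ']; exact mul_le_mul_of_nonneg_left ih hα

lemma integrable_exp_mul_sub_of_ae_increment_le [IsFiniteMeasure μ]
    (hX : ∀ n, AEMeasurable (X n) μ) {c t : ℝ} (ht : 0 ≤ t)
    (hinc : ∀ j, ∀ᵐ ω ∂μ, X (j + 1) ω - X j ω ≤ c) (n : ℕ) :
    Integrable (fun ω ↦ exp (t * (X n ω - X 0 ω))) μ :=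
  integrable_exp_mul_of_le t (c * n) ht ((hX n).sub (hX 0))
    (ae_sub_le_mul_of_ae_increment_le hinc n)

lemma MeasureTheory.Supermartingale.mgf_sub_le_twoPointMgf_pow [IsProbabilityMeasure μ]
    (hX : Supermartingale X ℱ μ) {C c t : ℝ} (hcC : 0 < c + C) (ht : 0 ≤ t)
    (hinc : ∀ j, ∀ᵐ ω ∂μ, -C ≤ X (j + 1) ω - X j ω ∧ X (j + 1) ω - X j ω ≤ c) (n : ℕ) :
    mgf (fun ω ↦ X n ω - X 0 ω) μ t ≤ twoPointMgf C c t ^ n := by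
  have hmeas (j : ℕ) : AEMeasurable (X j) μ := (hX.integrable j).aemeasurable
  have hup (j : ℕ) : ∀ᵐ ω ∂μ, X (j + 1) ω - X j ω ≤ c := (hinc j).mono fun _ h ↦ h.2
  refine mgf_sub_le_pow_of_condExp_le hX.stronglyAdapted
    (integrable_exp_mul_sub_of_ae_increment_le hmeas ht hup)
    (fun j ↦ integrable_exp_mul_of_le t c ht ((hmeas (j + 1)).sub (hmeas j)) (hup j))
    (fun j ↦ condExp_exp_mul_le_twoPointMgf (ℱ.le j) hcC ht
      ((hX.integrable _).sub (hX.integrable _)) (hinc j) (hX.condExp_sub_nonpos j.le_succ)) n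

end Increments

end Conditional

theorem asymmetric_azuma {Ω : Type*} {m0 : MeasurableSpace Ω}
    {μ : Measure Ω} [IsProbabilityMeasure μ]
    (ℱ : Filtration ℕ m0) (X : ℕ → Ω → ℝ)
    (hX : Supermartingale X ℱ μ) (C c : ℝ) (hc : 0 < c) (hcC : c < C / 10)
    (m : ℕ)
    (hinc : ∀ j, ∀ᵐ ω ∂μ, -C ≤ X (j + 1) ω - X j ω ∧ X (j + 1) ω - X j ω ≤ c)
    (a : ℝ) (ha : 0 < a) (ham : a < c * m) :
    μ {ω | X m ω - X 0 ω > a} ≤ ENNReal.ofReal (Real.exp (-a ^ 2 / (3 * c * C * m))) := by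
  have hC : 0 < C := by linarith
  have hm : (0 : ℝ) < m := pos_of_mul_pos_right (ha.trans ham) hc.le
  set t := 2 * a / (3 * c * C * m) with ht_def
  have ht : 0 ≤ t := by positivity
  have htC : |t * C| ≤ 1 := by
    rw [abs_of_nonneg (by positivity), div_mul_eq_mul_div, div_le_one (by positivity)]
    nlinarith
  have htc : |t * c| ≤ 1 := by
    rw [abs_of_nonneg (by positivity), div_mul_eq_mul_div, div_le_one (by positivity)]
    nlinarith
  have hmgf : mgf (fun ω ↦ X m ω - X 0 ω) μ t ≤ exp (3 / 4 * t ^ 2 * c * C * m) := calc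
    _ ≤ twoPointMgf C c t ^ m := hX.mgf_sub_le_twoPointMgf_pow (by linarith) ht hinc m
    _ ≤ exp (3 / 4 * t ^ 2 * c * C) ^ m :=
      pow_le_pow_left₀ (by unfold twoPointMgf; positivity)
        (twoPointMgf_le_exp hc.le hC.le (by linarith) htC htc) m
    _ = exp (3 / 4 * t ^ 2 * c * C * m) := by rw [← exp_nat_mul]; ring_nf
  have hchernoff := measure_ge_le_exp_mul_mgf a ht (integrable_exp_mul_sub_of_ae_increment_le
    (fun n ↦ (hX.integrable n).aemeasurable) ht (fun j ↦ (hinc j).mono fun _ h ↦ h.2) m)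
  calc μ {ω | X m ω - X 0 ω > a} ≤ μ {ω | a ≤ X m ω - X 0 ω} :=
        measure_mono (Set.ofPred_subset_ofPred.2 fun _ ↦ le_of_lt)
    _ = ENNReal.ofReal (μ.real {ω | a ≤ X m ω - X 0 ω}) := by rw [ofReal_measureReal]
    _ ≤ ENNReal.ofReal (exp (-t * a) * exp (3 / 4 * t ^ 2 * c * C * m)) :=
      ENNReal.ofReal_le_ofReal (hchernoff.trans (mul_le_mul_of_nonneg_left hmgf (exp_pos _).le))
    _ = ENNReal.ofReal (exp (-a ^ 2 / (3 * c * C * m))) := by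
      rw [← exp_add, ht_def]; congr 2; field_simp; ring
end
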